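/- arXiv:2508.06298 — 2 statements merged into one kernel-verified Lean document; each statement's English description precedes it below -/
import Mathlib

section
/- Let μ_sc be the semicircular law, the probability measure on ℝ with density f(x) = (1/(2π))√(4 − x²) on [−2, 2] and zero elsewhere. For every real z ≥ 2, ∫_{−2}^{2} log(z − x) dμ_sc(x) = (1/4) z (z − √(z² − 4)) + log(z + √(z² − 4)) − log 2 − 1/2. -/
/-!
For `z > 2` the potential `Φ z = ∫ log (z - x) dμ_sc` can be differentiated under the
integral; its derivative is the Stieltjes transform
`∫ dμ_sc(x) / (z - x) = (z - √(z² - 4)) / 2`, computed from an explicit arcsine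
antiderivative, and this is also the derivative of the right-hand side. Both sides are
continuous on `[2, ∞)` (at `z = 2` by dominated convergence, `log (2 - x)` being integrable),
so they differ by a constant, and the constant is `0` because both are `log z + o(1)` as
`z → ∞`: for the potential this follows from `log (z - 2) ≤ Φ z ≤ log (z + 2)`.
-/

open MeasureTheory Real

/-- The semicircular law: the probability measure on `ℝ` with density
`(1/(2π))√(4 − x²)` on `[−2, 2]` and `0` elsewhere. -/
noncomputable def semicircleLaw : Measure ℝ :=
  volume.withDensity (fun x : ℝ =>
    ENNReal.ofReal (if |x| ≤ 2 then Real.sqrt (4 - x ^ 2) / (2 * π) else 0))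

open Set Filter Topology

noncomputable def semicircleDensity (x : ℝ) : ℝ := √(4 - x ^ 2) / (2 * π)

@[fun_prop]
lemma continuous_semicircleDensity : Continuous semicircleDensity := by
  unfold semicircleDensity; fun_prop

lemma semicircleDensity_nonneg (x : ℝ) : 0 ≤ semicircleDensity x := by
  unfold semicircleDensity; positivity

lemma semicircleDensity_eq_zero {x : ℝ} (hx : 2 ≤ |x|) : semicircleDensity x = 0 := by
  have : 4 ≤ x ^ 2 := by nlinarith [sq_abs x, abs_nonneg x]
  rw [semicircleDensity, sqrt_eq_zero'.2 (by linarith), zero_div]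

-- The cutoff `|x| ≤ 2` in `semicircleLaw` is redundant: `Real.sqrt` vanishes on negative numbers.
lemma semicircleLaw_eq_withDensity :
    semicircleLaw = volume.withDensity fun x => ENNReal.ofReal (semicircleDensity x) := by
  refine congrArg _ (funext fun x => ?_)
  split_ifs with hx
  · rfl
  · rw [semicircleDensity_eq_zero (not_le.1 hx).le]

theorem integral_semicircleLaw (f : ℝ → ℝ) :
    ∫ x, f x ∂semicircleLaw = ∫ x in (-2)..2, f x * semicircleDensity x := by
  have hsupp : ∀ x ∉ Ioc (-2 : ℝ) 2, semicircleDensity x * f x = 0 := fun x hx => by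
    rw [semicircleDensity_eq_zero, zero_mul]
    rw [mem_Ioc, not_and_or, not_lt, not_le] at hx
    rcases hx with hx | hx
    · rw [abs_of_neg (by linarith)]; linarith
    · rw [abs_of_pos (by linarith)]; linarith
  rw [semicircleLaw_eq_withDensity, integral_withDensity_eq_integral_toReal_smul
      continuous_semicircleDensity.measurable.ennreal_ofReal
      (ae_of_all _ fun _ => ENNReal.ofReal_lt_top),
    intervalIntegral.integral_of_le (by norm_num)]
  simp only [ENNReal.toReal_ofReal (semicircleDensity_nonneg _), smul_eq_mul]
  rw [← setIntegral_eq_integral_of_forall_compl_eq_zero hsupp]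
  simp_rw [mul_comm]

theorem integral_sqrt_four_sub_sq : ∫ x in (-2 : ℝ)..2, √(4 - x ^ 2) = 2 * π := by
  have h := intervalIntegral.integral_comp_mul_left (fun u : ℝ => √(4 - u ^ 2))
    (two_ne_zero (α := ℝ)) (a := -1) (b := 1)
  have hscale : ∀ x : ℝ, √(4 - (2 * x) ^ 2) = 2 * √(1 - x ^ 2) := fun x => by
    rw [show 4 - (2 * x) ^ 2 = 2 ^ 2 * (1 - x ^ 2) by ring, sqrt_mul (by norm_num),
      sqrt_sq (by norm_num)]
  simp only [hscale, intervalIntegral.integral_const_mul, integral_sqrt_one_sub_sq] at h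
  norm_num at h
  linarith

theorem integral_semicircleDensity : ∫ x in (-2 : ℝ)..2, semicircleDensity x = 1 := by
  simp only [semicircleDensity, intervalIntegral.integral_div, integral_sqrt_four_sub_sq]
  exact div_self (by positivity)

lemma hasDerivAt_arcsin_div_two {x : ℝ} (hx : x ∈ Ioo (-2 : ℝ) 2) :
    HasDerivAt (fun x => arcsin (x / 2)) (1 / √(4 - x ^ 2)) x := by
  refine ((hasDerivAt_arcsin (x := x / 2) (by linarith [hx.1]) (by linarith [hx.2])).comp x
    ((hasDerivAt_id x).div_const 2)).congr_deriv ?_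
  rw [show 1 - (x / 2) ^ 2 = (4 - x ^ 2) / 2 ^ 2 by ring, sqrt_div' _ (by norm_num),
    sqrt_sq (by norm_num)]
  simp [field]

noncomputable def semicircleStieltjesPrimitive (z x : ℝ) : ℝ :=
  z * arcsin (x / 2) - √(4 - x ^ 2) + √(z ^ 2 - 4) * arcsin ((4 - z * x) / (2 * (z - x)))

lemma hasDerivAt_semicircleStieltjesPrimitive {z x : ℝ} (hz : 2 < z)
    (hx : x ∈ Ioo (-2 : ℝ) 2) :
    HasDerivAt (semicircleStieltjesPrimitive z) (√(4 - x ^ 2) / (z - x)) x := by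
  have hzx : 0 < z - x := by linarith [hx.2]
  have hs : 0 < √(4 - x ^ 2) := sqrt_pos.2 (by nlinarith [hx.1, hx.2])
  have hw : 0 < √(z ^ 2 - 4) := sqrt_pos.2 (by nlinarith)
  have hs2 : √(4 - x ^ 2) ^ 2 = 4 - x ^ 2 := sq_sqrt (by nlinarith [hx.1, hx.2])
  have hw2 : √(z ^ 2 - 4) ^ 2 = z ^ 2 - 4 := sq_sqrt (by nlinarith)
  have hsqrt : HasDerivAt (fun x => √(4 - x ^ 2)) (-x / √(4 - x ^ 2)) x := by
    refine (((hasDerivAt_pow 2 x).const_sub 4).sqrt (by nlinarith [hx.1, hx.2])).congr_deriv ?_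
    field_simp
    norm_num
  have hdu : HasDerivAt (fun x => (4 - z * x) / (2 * (z - x)))
      ((4 - z ^ 2) / (2 * (z - x) ^ 2)) x := by
    refine ((((hasDerivAt_id' x).const_mul z).const_sub 4).div
      (((hasDerivAt_id' x).const_sub z).const_mul 2) (by positivity)).congr_deriv ?_
    field_simp
    ring
  have hhalf := hasDerivAt_arcsin_div_two hx
  set s := √(4 - x ^ 2)
  set w := √(z ^ 2 - 4)
  set u := (4 - z * x) / (2 * (z - x))
  -- `1 - u²` is the square `(w s / (2(z - x)))²`, which makes the arcsin term algebraic.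
  have hu2 : 1 - u ^ 2 = (w * s / (2 * (z - x))) ^ 2 := by
    rw [div_pow (w * s), mul_pow, hs2, hw2]
    simp only [u]
    field_simp
    ring
  have hu : √(1 - u ^ 2) = w * s / (2 * (z - x)) := by
    rw [hu2, sqrt_sq (by positivity)]
  have hu_lt : u ^ 2 < 1 := by nlinarith [hu2, (by positivity : 0 < w * s / (2 * (z - x)))]
  have harc := (hasDerivAt_arcsin (x := u) (by nlinarith) (by nlinarith)).comp x hdu
  refine (((hhalf.const_mul z).sub hsqrt).add (harc.const_mul w)).congr_deriv ?_
  rw [hu]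
  field_simp
  linear_combination -hs2

lemma continuousOn_semicircleStieltjesPrimitive {z : ℝ} (hz : 2 < z) :
    ContinuousOn (semicircleStieltjesPrimitive z) (Icc (-2) 2) := by
  have hzx : ∀ x ∈ Icc (-2 : ℝ) 2, 2 * (z - x) ≠ 0 := fun x hx => by nlinarith [hx.2]
  unfold semicircleStieltjesPrimitive
  fun_prop (disch := assumption)

theorem integral_sqrt_four_sub_sq_div_sub {z : ℝ} (hz : 2 < z) :
    ∫ x in (-2 : ℝ)..2, √(4 - x ^ 2) / (z - x) = π * (z - √(z ^ 2 - 4)) := by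
  have hint : ContinuousOn (fun x => √(4 - x ^ 2) / (z - x)) (uIcc (-2) 2) := by
    have hzx : ∀ x ∈ uIcc (-2 : ℝ) 2, z - x ≠ 0 := fun x hx => by
      rw [uIcc_of_le (by norm_num)] at hx; linarith [hx.2]
    fun_prop (disch := assumption)
  rw [intervalIntegral.integral_eq_sub_of_hasDerivAt_of_le (by norm_num)
    (continuousOn_semicircleStieltjesPrimitive hz)
    (fun x hx => hasDerivAt_semicircleStieltjesPrimitive hz hx) hint.intervalIntegrable]
  have hright : (4 - z * 2) / (2 * (z - 2)) = -1 := by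
    rw [div_eq_iff (by nlinarith)]; ring
  have hleft : (4 - z * -2) / (2 * (z - -2)) = 1 := by
    rw [div_eq_iff (by nlinarith)]; ring
  simp only [semicircleStieltjesPrimitive, hright, hleft]
  norm_num
  ring

theorem integral_inv_sub_mul_semicircleDensity {z : ℝ} (hz : 2 < z) :
    ∫ x in (-2 : ℝ)..2, (z - x)⁻¹ * semicircleDensity x = (z - √(z ^ 2 - 4)) / 2 := by
  have h : ∀ x ∈ uIcc (-2 : ℝ) 2, (z - x)⁻¹ * semicircleDensity x
      = √(4 - x ^ 2) / (z - x) / (2 * π) := fun x _ => by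
    rw [semicircleDensity]; ring
  rw [intervalIntegral.integral_congr h, intervalIntegral.integral_div,
    integral_sqrt_four_sub_sq_div_sub hz]
  field_simp

noncomputable def semicircleLogPotential (z : ℝ) : ℝ :=
  ∫ x in (-2 : ℝ)..2, log (z - x) * semicircleDensity x

theorem hasDerivAt_semicircleLogPotential {z : ℝ} (hz : 2 < z) :
    HasDerivAt semicircleLogPotential ((z - √(z ^ 2 - 4)) / 2) z := by
  set ε := (z - 2) / 2
  have hε : 0 < ε := by simp only [ε]; linarith
  have hgap : ∀ x ∈ uIoc (-2 : ℝ) 2, ∀ y ∈ Metric.ball z ε, ε ≤ y - x := by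
    intro x hx y hy
    rw [uIoc_of_le (by norm_num)] at hx
    rw [Metric.mem_ball, dist_comm, Real.dist_eq, abs_lt] at hy
    simp only [ε] at *; linarith [hx.2]
  have hcont : ContinuousOn (fun x => log (z - x) * semicircleDensity x) (uIcc (-2) 2) := by
    have hzx : ∀ x ∈ uIcc (-2 : ℝ) 2, z - x ≠ 0 := fun x hx => by
      rw [uIcc_of_le (by norm_num)] at hx; linarith [hx.2]
    fun_prop (disch := assumption)
  have hmeas : ∀ y, AEStronglyMeasurable (fun x => log (y - x) * semicircleDensity x)
      (volume.restrict (uIoc (-2) 2)) :=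
    fun y => (by fun_prop : Measurable _).aestronglyMeasurable
  have key := intervalIntegral.hasDerivAt_integral_of_dominated_loc_of_deriv_le (μ := volume)
    (F' := fun y x => (y - x)⁻¹ * semicircleDensity x)
    (bound := fun x => ε⁻¹ * semicircleDensity x) (Metric.ball_mem_nhds z hε)
    (.of_forall hmeas) hcont.intervalIntegrable (by fun_prop)
    (ae_of_all _ fun x hx y hy => by
      have hxy := hgap x hx y hy
      rw [norm_mul, norm_inv, norm_of_nonneg (by linarith),
        norm_of_nonneg (semicircleDensity_nonneg x)]
      exact mul_le_mul_of_nonneg_right (inv_anti₀ hε hxy) (semicircleDensity_nonneg x))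
    ((by fun_prop : Continuous fun x => ε⁻¹ * semicircleDensity x).intervalIntegrable _ _)
    (ae_of_all _ fun x hx y hy => by
      have hxy := hgap x hx y hy
      simpa using ((hasDerivAt_id' y).sub_const x).log (by linarith) |>.mul_const _)
  rw [← integral_inv_sub_mul_semicircleDensity hz]
  exact key.2

lemma abs_log_le_abs_log_add_abs_log {a t b : ℝ} (ha : 0 < a) (hat : a ≤ t) (htb : t ≤ b) :
    |log t| ≤ |log a| + |log b| := by
  have h₁ := log_le_log ha hat
  have h₂ := log_le_log (ha.trans_le hat) htb
  rw [abs_le]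
  constructor <;> linarith [neg_abs_le (log a), le_abs_self (log b), abs_nonneg (log a),
    abs_nonneg (log b)]

theorem continuousOn_semicircleLogPotential (b : ℝ) :
    ContinuousOn semicircleLogPotential (Icc 2 b) := by
  intro z₀ hz₀
  have hbound : IntervalIntegrable (fun x => (|log (2 - x)| + |log (b + 2)|) * semicircleDensity x)
      volume (-2) 2 := by
    have hlog : IntervalIntegrable (fun x => log (2 - x)) volume (-2) 2 := by
      simpa [show (2 : ℝ) - 4 = -2 by norm_num] using
        intervalIntegral.intervalIntegrable_log'.comp_sub_left 2 (a := 4) (b := 0)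
    exact (hlog.abs.add intervalIntegrable_const).mul_continuousOn (by fun_prop)
  refine intervalIntegral.continuousWithinAt_of_dominated_interval
    (.of_forall fun y => (by fun_prop : Measurable _).aestronglyMeasurable) ?_ hbound
    (ae_of_all _ fun x hx => ?_)
  · filter_upwards [self_mem_nhdsWithin] with y hy
    refine ae_of_all _ fun x hx => ?_
    rw [uIoc_of_le (by norm_num)] at hx
    rw [norm_mul, norm_of_nonneg (semicircleDensity_nonneg x)]
    rcases hx.2.lt_or_eq with hx2 | rfl
    · refine mul_le_mul_of_nonneg_right ?_ (semicircleDensity_nonneg x)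
      exact abs_log_le_abs_log_add_abs_log (by linarith) (by linarith [hy.1])
        (by linarith [hy.2, hx.1])
    · simp [semicircleDensity_eq_zero]
  · rw [uIoc_of_le (by norm_num)] at hx
    rcases hx.2.lt_or_eq with hx2 | rfl
    · have : z₀ - x ≠ 0 := by linarith [hz₀.1]
      exact (ContinuousAt.continuousWithinAt (by fun_prop (disch := assumption)))
    · simp only [semicircleDensity_eq_zero (by norm_num : (2 : ℝ) ≤ |2|), mul_zero]
      exact continuousWithinAt_const

lemma integral_const_mul_semicircleDensity (c : ℝ) :
    ∫ x in (-2 : ℝ)..2, c * semicircleDensity x = c := by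
  rw [intervalIntegral.integral_const_mul, integral_semicircleDensity, mul_one]

theorem semicircleLogPotential_mem_Icc {z : ℝ} (hz : 2 < z) :
    semicircleLogPotential z ∈ Icc (log (z - 2)) (log (z + 2)) := by
  have hcont : ∀ c : ℝ, IntervalIntegrable (fun x => c * semicircleDensity x) volume (-2) 2 :=
    fun c => (by fun_prop : Continuous fun x => c * semicircleDensity x).intervalIntegrable _ _
  have hint : IntervalIntegrable (fun x => log (z - x) * semicircleDensity x) volume (-2) 2 := by
    have hzx : ∀ x ∈ uIcc (-2 : ℝ) 2, z - x ≠ 0 := fun x hx => by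
      rw [uIcc_of_le (by norm_num)] at hx; linarith [hx.2]
    exact ContinuousOn.intervalIntegrable (by fun_prop (disch := assumption))
  constructor
  · rw [← integral_const_mul_semicircleDensity (log (z - 2))]
    refine intervalIntegral.integral_mono_on (by norm_num) (hcont _) hint fun x hx => ?_
    exact mul_le_mul_of_nonneg_right (log_le_log (by linarith) (by linarith [hx.2]))
      (semicircleDensity_nonneg x)
  · rw [← integral_const_mul_semicircleDensity (log (z + 2))]
    refine intervalIntegral.integral_mono_on (by norm_num) hint (hcont _) fun x hx => ?_
    exact mul_le_mul_of_nonneg_right (log_le_log (by linarith [hx.2]) (by linarith [hx.1]))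
      (semicircleDensity_nonneg x)

theorem tendsto_semicircleLogPotential_sub_log :
    Tendsto (fun z => semicircleLogPotential z - log z) atTop (𝓝 0) := by
  have hlower : Tendsto (fun z => log (z - 2) - log z) atTop (𝓝 0) := by
    simpa only [sub_eq_add_neg] using tendsto_log_comp_add_sub_log (-2)
  refine tendsto_of_tendsto_of_tendsto_of_le_of_le' hlower (tendsto_log_comp_add_sub_log 2) ?_ ?_
  · filter_upwards [eventually_gt_atTop 2] with z hz
    linarith [(semicircleLogPotential_mem_Icc hz).1]
  · filter_upwards [eventually_gt_atTop 2] with z hz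
    linarith [(semicircleLogPotential_mem_Icc hz).2]

noncomputable def semicircleLogPotentialFormula (z : ℝ) : ℝ :=
  (1 / 4) * z * (z - √(z ^ 2 - 4)) + log (z + √(z ^ 2 - 4)) - log 2 - 1 / 2

theorem continuousOn_semicircleLogPotentialFormula :
    ContinuousOn semicircleLogPotentialFormula (Ici 2) := by
  have hpos : ∀ z ∈ Ici (2 : ℝ), z + √(z ^ 2 - 4) ≠ 0 := fun z hz => by
    have := sqrt_nonneg (z ^ 2 - 4); rw [mem_Ici] at hz; linarith
  unfold semicircleLogPotentialFormula
  fun_prop (disch := assumption)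

theorem hasDerivAt_semicircleLogPotentialFormula {z : ℝ} (hz : 2 < z) :
    HasDerivAt semicircleLogPotentialFormula ((z - √(z ^ 2 - 4)) / 2) z := by
  have hw : 0 < √(z ^ 2 - 4) := sqrt_pos.2 (by nlinarith)
  have hw2 : √(z ^ 2 - 4) ^ 2 = z ^ 2 - 4 := sq_sqrt (by nlinarith)
  have hdw : HasDerivAt (fun z => √(z ^ 2 - 4)) (z / √(z ^ 2 - 4)) z := by
    refine (((hasDerivAt_pow 2 z).sub_const 4).sqrt (by nlinarith)).congr_deriv ?_
    field_simp
    norm_num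
  have hzw : z + √(z ^ 2 - 4) ≠ 0 := by linarith
  refine (((((hasDerivAt_id' z).const_mul (1 / 4)).mul ((hasDerivAt_id' z).sub hdw)).add
    (((hasDerivAt_id' z).add hdw).log hzw)).sub_const (log 2)).sub_const (1 / 2) |>.congr_deriv ?_
  simp only [Pi.add_apply, Pi.sub_apply]
  field_simp
  linear_combination 2 * (z + √(z ^ 2 - 4)) * hw2

lemma tendsto_sqrt_sq_sub_four_div_self :
    Tendsto (fun z => √(z ^ 2 - 4) / z) atTop (𝓝 1) := by
  have h : Tendsto (fun z : ℝ => √(1 - 4 / z ^ 2)) atTop (𝓝 1) := by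
    have h0 : Tendsto (fun z : ℝ => 1 - 4 / z ^ 2) atTop (𝓝 (1 - 0)) :=
      tendsto_const_nhds.sub (tendsto_const_nhds.div_atTop (tendsto_pow_atTop two_ne_zero))
    simpa using h0.sqrt
  refine h.congr' ?_
  filter_upwards [eventually_gt_atTop 0] with z hz
  rw [← sqrt_sq hz.le, ← sqrt_div' _ (sq_nonneg z), sqrt_sq hz.le]
  congr 1
  field_simp

theorem tendsto_semicircleLogPotentialFormula_sub_log :
    Tendsto (fun z => semicircleLogPotentialFormula z - log z) atTop (𝓝 0) := by
  have hr := tendsto_const_nhds (x := (1 : ℝ)).add tendsto_sqrt_sq_sub_four_div_self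
  have h := (((hr.inv₀ (by norm_num)).add (hr.log (by norm_num))).sub_const (log 2)).sub_const
    (1 / 2)
  norm_num at h
  refine h.congr' ?_
  filter_upwards [eventually_gt_atTop 2] with z hz
  have hw2 : √(z ^ 2 - 4) ^ 2 = z ^ 2 - 4 := sq_sqrt (by nlinarith)
  have hw := sqrt_nonneg (z ^ 2 - 4)
  have hlog : log (z + √(z ^ 2 - 4)) = log (1 + √(z ^ 2 - 4) / z) + log z := by
    rw [← log_mul (by positivity) (by positivity)]
    congr 1
    field_simp
  rw [semicircleLogPotentialFormula, hlog]
  field_simp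
  linear_combination 2 * z * hw2

theorem eqOn_Ici_of_hasDerivAt_eq_of_tendsto_sub {f g f' : ℝ → ℝ} {a : ℝ}
    (hf : ∀ b, ContinuousOn f (Icc a b)) (hg : ∀ b, ContinuousOn g (Icc a b))
    (hf' : ∀ x, a < x → HasDerivAt f (f' x) x) (hg' : ∀ x, a < x → HasDerivAt g (f' x) x)
    (hlim : Tendsto (fun x => f x - g x) atTop (𝓝 0)) :
    EqOn f g (Ici a) := by
  have hconst : ∀ b, a ≤ b → f b - g b = f a - g a := fun b hab => by
    have h := intervalIntegral.integral_eq_sub_of_hasDerivAt_of_le hab ((hf b).sub (hg b))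
      (fun x hx => ((hf' x hx.1).sub (hg' x hx.1)).congr_deriv (sub_self _))
      (intervalIntegrable_const (c := (0 : ℝ)))
    simp only [intervalIntegral.integral_zero, Pi.sub_apply] at h
    linarith
  have hzero : f a - g a = 0 :=
    tendsto_nhds_unique (tendsto_const_nhds.congr' (by
      filter_upwards [eventually_ge_atTop a] with b hb
      exact (hconst b hb).symm)) hlim
  intro b hb
  linarith [hconst b hb]

theorem semicircleLogPotential_eqOn :
    EqOn semicircleLogPotential semicircleLogPotentialFormula (Ici 2) := by
  have hlim := tendsto_semicircleLogPotential_sub_log.sub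
    tendsto_semicircleLogPotentialFormula_sub_log
  simp only [sub_sub_sub_cancel_right, sub_zero] at hlim
  exact eqOn_Ici_of_hasDerivAt_eq_of_tendsto_sub continuousOn_semicircleLogPotential
    (fun _ => continuousOn_semicircleLogPotentialFormula.mono Icc_subset_Ici_self)
    (fun _ hz => hasDerivAt_semicircleLogPotential hz)
    (fun _ hz => hasDerivAt_semicircleLogPotentialFormula hz) hlim

/-- **Logarithmic potential of the semicircular law.**  For every real `z ≥ 2`,
`∫ log(z − x) dμ_sc(x) = (1/4) z (z − √(z² − 4)) + log(z + √(z² − 4)) − log 2 − 1/2`. -/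
theorem integral_log_sub_semicircle (z : ℝ) (hz : 2 ≤ z) :
    ∫ x, Real.log (z - x) ∂semicircleLaw =
      (1 / 4) * z * (z - Real.sqrt (z ^ 2 - 4)) + Real.log (z + Real.sqrt (z ^ 2 - 4))
        - Real.log 2 - 1 / 2 := by
  rw [integral_semicircleLaw]
  exact semicircleLogPotential_eqOn hz
end

section
/- Let μ_sc be the semicircular law, the probability measure on ℝ with density f(x) = (1/(2π))√(4 − x²) on [−2, 2] and zero elsewhere. Then ∫_{−2}^{2} log(2 − x) dμ_sc(x) = 1/2. -/
/-!
The reflection `x ↦ -x` shows that `log (2 - x)` and `log (2 + x)` have the same integral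
against `√(4 - x²)`, so twice the integral in question is `∫ log (4 - x²) √(4 - x²) dx`.
The substitution `x = 2 cos θ` turns this into `4 ∫₀^π sin² θ log (4 sin² θ) dθ`, which is
evaluated using `∫₀^π log sin = -π log 2` and an integration by parts against the primitive
`sin θ cos θ log (sin θ)`, giving `∫₀^π cos 2θ log (sin θ) dθ = -π/2`.
-/

open MeasureTheory Real

theorem integral_cos_two_mul_mul_log_sin :
    ∫ θ in 0..π, cos (2 * θ) * log (sin θ) = -(π / 2) := by
  have hderiv : ∀ θ ∈ Set.Ioo 0 π, HasDerivAt (fun θ => cos θ * (sin θ * log (sin θ)))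
      (cos (2 * θ) * log (sin θ) + cos θ ^ 2) θ := fun θ hθ => by
    have hsin : sin θ ≠ 0 := (sin_pos_of_pos_of_lt_pi hθ.1 hθ.2).ne'
    refine ((hasDerivAt_cos θ).mul
      ((hasDerivAt_mul_log hsin).comp θ (hasDerivAt_sin θ))).congr_deriv ?_
    rw [Function.comp_apply, cos_two_mul']
    ring
  have hint : IntervalIntegrable (fun θ => cos (2 * θ) * log (sin θ)) volume 0 π :=
    intervalIntegrable_log_sin.continuousOn_mul (by fun_prop)
  have hcos_sq : IntervalIntegrable (fun θ => cos θ ^ 2) volume 0 π :=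
    (continuous_cos.pow 2).intervalIntegrable _ _
  have hftc := intervalIntegral.integral_eq_sub_of_hasDerivAt_of_le pi_pos.le
    (continuous_cos.mul (continuous_mul_log.comp continuous_sin)).continuousOn hderiv
    (hint.add hcos_sq)
  rw [intervalIntegral.integral_add hint hcos_sq, integral_cos_sq] at hftc
  simp only [cos_pi, sin_pi, mul_zero, cos_zero, sin_zero, sub_self, zero_add, sub_zero,
    Pi.mul_apply, Function.comp_apply, log_zero] at hftc
  linarith

theorem integral_sin_sq_mul_log_sin :
    ∫ θ in 0..π, sin θ ^ 2 * log (sin θ) = π / 4 - π / 2 * log 2 := by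
  have hlog : IntervalIntegrable (fun θ => log (sin θ)) volume 0 π := intervalIntegrable_log_sin
  have hsplit : ∀ θ, sin θ ^ 2 * log (sin θ)
      = 2⁻¹ * log (sin θ) - 2⁻¹ * (cos (2 * θ) * log (sin θ)) := fun θ => by
    rw [sin_sq_eq_half_sub]; ring
  simp_rw [hsplit]
  rw [intervalIntegral.integral_sub (hlog.const_mul _)
      ((hlog.continuousOn_mul (by fun_prop)).const_mul _),
    intervalIntegral.integral_const_mul, intervalIntegral.integral_const_mul,
    integral_log_sin_zero_pi, integral_cos_two_mul_mul_log_sin]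
  ring

theorem four_sub_two_mul_cos_sq (θ : ℝ) : 4 - (2 * cos θ) ^ 2 = (2 * sin θ) ^ 2 := by
  linear_combination (-4) * sin_sq_add_cos_sq θ

theorem sqrt_four_sub_two_mul_cos_sq {θ : ℝ} (hθ : θ ∈ Set.Icc 0 π) :
    √(4 - (2 * cos θ) ^ 2) = 2 * sin θ := by
  rw [four_sub_two_mul_cos_sq, sqrt_sq (mul_nonneg zero_le_two (sin_nonneg_of_mem_Icc hθ))]

theorem integral_mul_sqrt_four_sub_sq (g : ℝ → ℝ) :
    ∫ x in -2..2, g x * √(4 - x ^ 2) = 4 * ∫ θ in 0..π, g (2 * cos θ) * sin θ ^ 2 := by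
  have hsubst := intervalIntegral.integral_deriv_smul_comp_of_deriv_nonpos (a := 0) (b := π)
    (f := fun θ => 2 * cos θ) (f' := fun θ => -(2 * sin θ)) (g := fun x => g x * √(4 - x ^ 2))
    (by fun_prop) (fun θ _ => by simpa using (hasDerivAt_cos θ).const_mul 2)
    (fun θ hθ => by
      rw [min_eq_left pi_pos.le, max_eq_right pi_pos.le] at hθ
      linarith [sin_pos_of_pos_of_lt_pi hθ.1 hθ.2])
  simp only [cos_zero, cos_pi, mul_one, mul_neg] at hsubst
  rw [intervalIntegral.integral_symm, ← hsubst, ← intervalIntegral.integral_neg,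
    ← intervalIntegral.integral_const_mul]
  refine intervalIntegral.integral_congr fun θ hθ => ?_
  rw [Set.uIcc_of_le pi_pos.le] at hθ
  simp only [Function.comp_apply, smul_eq_mul, sqrt_four_sub_two_mul_cos_sq hθ]
  ring

theorem integral_log_four_sub_sq_mul_sqrt :
    ∫ x in -2..2, log (4 - x ^ 2) * √(4 - x ^ 2) = 2 * π := by
  have hlog : ∀ θ, log (4 - (2 * cos θ) ^ 2) * sin θ ^ 2
      = 2 * log 2 * sin θ ^ 2 + 2 * (sin θ ^ 2 * log (sin θ)) := fun θ => by
    rw [four_sub_two_mul_cos_sq, log_pow]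
    rcases eq_or_ne (sin θ) 0 with h | h
    · simp [h]
    · rw [log_mul two_ne_zero h]; push_cast; ring
  have hsin_sq : IntervalIntegrable (fun θ => sin θ ^ 2) volume 0 π :=
    (continuous_sin.pow 2).intervalIntegrable _ _
  have hsin_sq_log : IntervalIntegrable (fun θ => sin θ ^ 2 * log (sin θ)) volume 0 π :=
    intervalIntegrable_log_sin.continuousOn_mul (by fun_prop)
  simp_rw [integral_mul_sqrt_four_sub_sq, hlog]
  rw [intervalIntegral.integral_add (hsin_sq.const_mul _) (hsin_sq_log.const_mul _),
    intervalIntegral.integral_const_mul, intervalIntegral.integral_const_mul, integral_sin_sq,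
    integral_sin_sq_mul_log_sin]
  simp only [sin_zero, cos_zero, mul_one, sin_pi, cos_pi, mul_neg, neg_zero, sub_self, zero_add,
    sub_zero]
  ring

theorem integral_log_two_sub_mul_sqrt :
    ∫ x in -2..2, log (2 - x) * √(4 - x ^ 2) = π := by
  have hint : IntervalIntegrable (fun x => log (2 - x) * √(4 - x ^ 2)) volume (-2) 2 :=
    (analyticOnNhd_const.sub analyticOnNhd_id).meromorphicOn.intervalIntegrable_log
      |>.mul_continuousOn (by fun_prop)
  have hint' : IntervalIntegrable (fun x => log (2 + x) * √(4 - x ^ 2)) volume (-2) 2 :=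
    (analyticOnNhd_const.add analyticOnNhd_id).meromorphicOn.intervalIntegrable_log
      |>.mul_continuousOn (by fun_prop)
  have hreflect : ∫ x in -2..2, log (2 + x) * √(4 - x ^ 2)
      = ∫ x in -2..2, log (2 - x) * √(4 - x ^ 2) := by
    have h := intervalIntegral.integral_comp_neg (a := -2) (b := 2)
      fun x => log (2 - x) * √(4 - x ^ 2)
    simp only [sub_neg_eq_add, neg_sq, neg_neg] at h
    exact h
  have hsum : ∀ x : ℝ, log (2 - x) * √(4 - x ^ 2) + log (2 + x) * √(4 - x ^ 2)
      = log (4 - x ^ 2) * √(4 - x ^ 2) := fun x => by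
    rw [← add_mul, show 4 - x ^ 2 = (2 - x) * (2 + x) by ring]
    rcases eq_or_ne ((2 - x) * (2 + x)) 0 with h | h
    · simp [h]
    · rw [log_mul (left_ne_zero_of_mul h) (right_ne_zero_of_mul h)]
  have htwice := intervalIntegral.integral_add hint hint'
  simp_rw [hsum, hreflect, integral_log_four_sub_sq_mul_sqrt] at htwice
  linarith

theorem integral_semicircleLaw_s8 (g : ℝ → ℝ) :
    ∫ x, g x ∂semicircleLaw = (2 * π)⁻¹ * ∫ x in -2..2, g x * √(4 - x ^ 2) := by
  have hdensity : ∀ x : ℝ,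
      (ENNReal.ofReal (if |x| ≤ 2 then √(4 - x ^ 2) / (2 * π) else 0)).toReal • g x
        = (Set.Icc (-2) 2).indicator (fun x => (2 * π)⁻¹ * (g x * √(4 - x ^ 2))) x :=
      fun x => by
    rw [ENNReal.toReal_ofReal (by positivity), smul_eq_mul]
    by_cases hx : |x| ≤ 2
    · rw [if_pos hx, Set.indicator_of_mem (Set.mem_Icc.mpr (abs_le.mp hx))]; ring
    · rw [if_neg hx, Set.indicator_of_notMem (mt (abs_le.mpr ∘ Set.mem_Icc.mp) hx), zero_mul]
  rw [semicircleLaw, integral_withDensity_eq_integral_toReal_smul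
      (Measurable.ite (measurableSet_le (by fun_prop) (by fun_prop)) (by fun_prop)
        (by fun_prop)).ennreal_ofReal
      (ae_of_all _ fun _ => ENNReal.ofReal_lt_top)]
  simp_rw [hdensity]
  rw [integral_indicator measurableSet_Icc, integral_Icc_eq_integral_Ioc,
    ← intervalIntegral.integral_of_le (by norm_num), intervalIntegral.integral_const_mul]

/-- `∫ log(2 − x) dμ_sc(x) = 1/2` for the semicircular law `μ_sc`. -/
theorem integral_log_two_sub_semicircle :
    ∫ x, Real.log (2 - x) ∂semicircleLaw = 1 / 2 := by
  rw [integral_semicircleLaw_s8, integral_log_two_sub_mul_sqrt]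
  field_simp
end
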